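/- Let G be a finitely generated group, H₁,…,Hₙ finitely generated subgroups, Xᵢ a nontrivial Hᵢ-almost invariant subset of G for each i, with the family in good position. Let A, B and C be distinct cross-connected components of Ē, and suppose that Ū and Ū′ lie in A, V̄ lies in B, and W̄ and W̄′ lie in C. If V̄ is between Ū and W̄, then V̄ is between Ū′ and W̄′. Hence the relation 'B is between A and C' is independent of the chosen representatives. -/

import Mathlib

section Defs

variable {G : Type*} [Group G]

/-- `W` is `H`-finite: contained in finitely many left cosets `Hg` of `H` in `G`. -/
def HFinite (H : Subgroup G) (W : Set G) : Prop :=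
  ∃ F : Finset G, W ⊆ ⋃ g ∈ F, (· * g) '' (H : Set G)

/-- The left translate `gX` of a subset `X` of `G`. -/
def leftTr (g : G) (X : Set G) : Set G := (g * ·) '' X

/-- `X` is an `H`-almost invariant subset of `G`: `HX = X` and for every `g` the
symmetric difference of `X` and `Xg` is `H`-finite. -/
def AlmostInv (H : Subgroup G) (X : Set G) : Prop :=
  (∀ h ∈ H, leftTr h X = X) ∧ ∀ g : G, HFinite H (symmDiff X ((· * g) '' X))

/-- `X` is a nontrivial `H`-almost invariant subset of `G`. -/
def NontrivialAI (H : Subgroup G) (X : Set G) : Prop :=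
  AlmostInv H X ∧ ¬ HFinite H X ∧ ¬ HFinite H Xᶜ

/-- `Y` crosses the `H`-almost invariant set `X`: none of the four corner sets is `H`-finite. -/
def Crosses (H : Subgroup G) (X Y : Set G) : Prop :=
  ¬ HFinite H (X ∩ Y) ∧ ¬ HFinite H (X ∩ Yᶜ) ∧ ¬ HFinite H (Xᶜ ∩ Y) ∧ ¬ HFinite H (Xᶜ ∩ Yᶜ)

/-- The coboundary `∂Y` of `Y` with respect to a finite generating set `S`. -/
def bdry (S : Finset G) (Y : Set G) : Set G :=
  {g : G | ∃ s ∈ (S : Set G) ∪ (S : Set G)⁻¹, (g ∈ Y) ≠ (g * s ∈ Y)}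

/-- `Y` crosses the `H`-almost invariant set `X` strongly: neither `∂Y ∩ X` nor
`∂Y ∩ X*` is `H`-finite. -/
def CrossesStrongly (S : Finset G) (H : Subgroup G) (X Y : Set G) : Prop :=
  ¬ HFinite H (bdry S Y ∩ X) ∧ ¬ HFinite H (bdry S Y ∩ Xᶜ)

/-- Two subsets of `G` are nested if one of the four corner sets is empty. -/
def Nested (U V : Set G) : Prop :=
  U ∩ V = ∅ ∨ U ∩ Vᶜ = ∅ ∨ Uᶜ ∩ V = ∅ ∨ Uᶜ ∩ Vᶜ = ∅

/-- The conjugate subgroup `gHg⁻¹`. -/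
def conjSub (g : G) (H : Subgroup G) : Subgroup G :=
  Subgroup.map (MulAut.conj g).toMonoidHom H

/-- A subgroup is two-ended if it contains an infinite cyclic subgroup of finite index. -/
def TwoEnded (H : Subgroup G) : Prop :=
  ∃ z : G, z ∈ H ∧ ¬ IsOfFinOrder z ∧ (Subgroup.zpowers z).relIndex H ≠ 0

/-- `G` is one-ended: `G` is infinite and every almost invariant subset of `G` (over the
trivial group) is finite or cofinite. -/
def OneEnded (G : Type*) [Group G] : Prop :=
  Infinite G ∧ ∀ X : Set G,
    (∀ g : G, (symmDiff X ((· * g) '' X)).Finite) → X.Finite ∨ Xᶜ.Finite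

/-- `G` is finitely presented. -/
def FinitelyPresentedGroup (G : Type*) [Group G] : Prop :=
  ∃ (n : ℕ) (R : Finset (FreeGroup (Fin n))),
    Nonempty (G ≃* FreeGroup (Fin n) ⧸ Subgroup.normalClosure (R : Set (FreeGroup (Fin n))))

/-- `Q(H)`: the collection of subsets of `G` which are almost invariant over some subgroup
commensurable with `H`. -/
def QH (H : Subgroup G) : Set (Set G) :=
  {X : Set G | ∃ K : Subgroup G, Subgroup.Commensurable K H ∧ AlmostInv K X}

/-- The Boolean algebra of subsets of `G` generated by a family `S` of subsets: the smallest
family containing `S` closed under complementation, finite intersections and finite unions. -/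
inductive BoolGen (S : Set (Set G)) : Set G → Prop
  | basic {U : Set G} : U ∈ S → BoolGen S U
  | compl {U : Set G} : BoolGen S U → BoolGen S Uᶜ
  | inter {U V : Set G} : BoolGen S U → BoolGen S V → BoolGen S (U ∩ V)
  | union {U V : Set G} : BoolGen S U → BoolGen S V → BoolGen S (U ∪ V)

/-- A subgroup is virtually free abelian of rank `m` if it has a finite index subgroup
isomorphic to `ℤ^m`. -/
def VirtuallyFreeAbelian (H : Subgroup G) (m : ℕ) : Prop :=
  ∃ K : Subgroup G, K ≤ H ∧ K.relIndex H ≠ 0 ∧ Nonempty (K ≃* Multiplicative (Fin m → ℤ))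

/-- `X` is `n`-canonical with respect to abelian groups: no translate of `X` crosses a
nontrivial almost invariant set over a virtually free abelian subgroup of rank at most `n`. -/
def NCanonicalAb (n : ℕ) (X : Set G) : Prop :=
  ∀ (L : Subgroup G) (m : ℕ), m ≤ n → VirtuallyFreeAbelian L m →
    ∀ Z : Set G, AlmostInv L Z → ¬ HFinite L Z → ¬ HFinite L Zᶜ →
      ∀ g : G, ¬ Crosses L Z (leftTr g X)

variable {ι : Type*}

/-- The set `E` of all translates of the sets `X i` and of their complements. -/
def Translates (X : ι → Set G) : Set (Set G) :=
  {U : Set G | ∃ (g : G) (i : ι), U = leftTr g (X i) ∨ U = (leftTr g (X i))ᶜ}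

/-- `W` is small for the element `U` of `E`: `W` is finite over the group `gHᵢg⁻¹`
associated to `U`. -/
def SmallOver (H : ι → Subgroup G) (X : ι → Set G) (U W : Set G) : Prop :=
  ∃ (g : G) (i : ι), (U = leftTr g (X i) ∨ U = (leftTr g (X i))ᶜ) ∧
    HFinite (conjSub g (H i)) W

/-- The four corner sets `U^{(*)} ∩ V^{(*)}`, indexed by pairs of booleans. -/
def corner (U V : Set G) (p : Bool × Bool) : Set G :=
  (cond p.1 U Uᶜ) ∩ (cond p.2 V Vᶜ)

/-- Condition (*): the family is in good position: whenever two of the four corner sets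
of a pair of elements of `E` are small, one of the corner sets is empty. -/
def GoodPosition (H : ι → Subgroup G) (X : ι → Set G) : Prop :=
  ∀ U ∈ Translates X, ∀ V ∈ Translates X,
    ∀ p q : Bool × Bool, p ≠ q →
      SmallOver H X U (corner U V p) → SmallOver H X U (corner U V q) →
        ∃ r : Bool × Bool, corner U V r = ∅

/-- The relation `U ≤ V` on `E`: `U ∩ V*` is empty or is the only small corner set. -/
def eLE (H : ι → Subgroup G) (X : ι → Set G) (U V : Set G) : Prop :=
  U ∩ Vᶜ = ∅ ∨
    (SmallOver H X U (U ∩ Vᶜ) ∧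
      ∀ p : Bool × Bool, p ≠ (true, false) → ¬ SmallOver H X U (corner U V p))

/-- The relation `U < V` on `E`. -/
def eLT (H : ι → Subgroup G) (X : ι → Set G) (U V : Set G) : Prop :=
  eLE H X U V ∧ U ≠ V

/-- `V` crosses the element `U` of `E`: no corner set is small. -/
def CrossesE (H : ι → Subgroup G) (X : ι → Set G) (U V : Set G) : Prop :=
  ∀ p : Bool × Bool, ¬ SmallOver H X U (corner U V p)

/-- `V` crosses the element `U` of `E` strongly. -/
def StronglyCrossesE (S : Finset G) (H : ι → Subgroup G) (X : ι → Set G) (U V : Set G) : Prop :=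
  ∃ (g : G) (i : ι), (U = leftTr g (X i) ∨ U = (leftTr g (X i))ᶜ) ∧
    ¬ HFinite (conjSub g (H i)) (bdry S V ∩ U) ∧ ¬ HFinite (conjSub g (H i)) (bdry S V ∩ Uᶜ)

/-- The relation on `E` generating the cross-connected components of `Ē`: two elements are
related if they coincide, are complementary, or cross. -/
def ccRelSet (H : ι → Subgroup G) (X : ι → Set G) (U V : Set G) : Prop :=
  U ∈ Translates X ∧ V ∈ Translates X ∧ (U = V ∨ U = Vᶜ ∨ CrossesE H X U V)

/-- `U` and `V` determine the same cross-connected component of `Ē`. -/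
def SameCCC (H : ι → Subgroup G) (X : ι → Set G) (U V : Set G) : Prop :=
  Relation.EqvGen (ccRelSet H X) U V

/-- `V̄` lies between `Ū` and `W̄` in `Ē`: some representatives satisfy `u < v < w`. -/
def BetweenBar (H : ι → Subgroup G) (X : ι → Set G) (U V W : Set G) : Prop :=
  ∃ u v w : Set G, (u = U ∨ u = Uᶜ) ∧ (v = V ∨ v = Vᶜ) ∧ (w = W ∨ w = Wᶜ) ∧
    eLT H X u v ∧ eLT H X v w

/-- The setoid on `E` whose classes are the cross-connected components of `Ē`. -/
def cccSetoid (H : ι → Subgroup G) (X : ι → Set G) :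
    Setoid {U : Set G // U ∈ Translates X} where
  r u v := SameCCC H X u.1 v.1
  iseqv := by
    refine ⟨fun u => Relation.EqvGen.refl _, ?_, ?_⟩
    · exact fun h => Relation.EqvGen.symm _ _ h
    · exact fun h₁ h₂ => Relation.EqvGen.trans _ _ _ h₁ h₂

theorem leftTr_leftTr (g g' : G) (X : Set G) : leftTr g (leftTr g' X) = leftTr (g * g') X := by
  simp only [leftTr, Set.image_image, mul_assoc]

theorem leftTr_compl (g : G) (X : Set G) : leftTr g Xᶜ = (leftTr g X)ᶜ :=
  Set.image_compl_eq (Group.mulLeft_bijective g)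

/-- Left translation as a map from `E` to `E`. -/
def translateE (X : ι → Set G) (g : G) (u : {U : Set G // U ∈ Translates X}) :
    {U : Set G // U ∈ Translates X} :=
  ⟨leftTr g u.1, by
    obtain ⟨g', i, h | h⟩ := u.2
    · exact ⟨g * g', i, Or.inl (by rw [h, leftTr_leftTr])⟩
    · exact ⟨g * g', i, Or.inr (by rw [h, leftTr_compl, leftTr_leftTr])⟩⟩

/-- Betweenness for cross-connected components: `B` lies between the distinct components
`A` and `C` if there are elements enclosed by them with `u < v < w`. -/
def BetweenCCC (H : ι → Subgroup G) (X : ι → Set G)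
    (A B C : Quotient (cccSetoid H X)) : Prop :=
  A ≠ B ∧ B ≠ C ∧ A ≠ C ∧
    ∃ u v w : {U : Set G // U ∈ Translates X},
      Quotient.mk (cccSetoid H X) u = A ∧ Quotient.mk (cccSetoid H X) v = B ∧
        Quotient.mk (cccSetoid H X) w = C ∧
        eLT H X u.1 v.1 ∧ eLT H X v.1 w.1

/-- The half-tree `Y_s` determined by the oriented edge `s = (u,v)`: the vertices
reachable from the terminal vertex `v` after deleting the edge `{u,v}`. -/
def halfTree {V : Type*} (T : SimpleGraph V) (u v : V) : Set V :=
  {w : V | (T.deleteEdges {s(u, v)}).Reachable v w}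

/-- With respect to a base vertex `b`, the subset `Z_s` of `G` determined by the
oriented edge `s = (u,v)`. -/
def Zset {V : Type*} [MulAction G V] (T : SimpleGraph V) (b u v : V) : Set G :=
  {g : G | g • b ∈ halfTree T u v}

/-- The vertex `v` encloses the `H`-almost invariant set `A`: for every edge `s`
oriented towards `v`, either `A ∩ Z_s*` or `A* ∩ Z_s*` is `H`-finite. -/
def Encloses {V : Type*} [MulAction G V] (T : SimpleGraph V) (b : V) (H : Subgroup G)
    (v : V) (A : Set G) : Prop :=
  ∀ u : V, T.Adj u v → HFinite H (A ∩ (Zset T b u v)ᶜ) ∨ HFinite H (Aᶜ ∩ (Zset T b u v)ᶜ)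

end Defs

/-! Fix the representative `v` of `V̄` with `u < v < w`. The property "some orientation of `x`
lies below `v`" is invariant under crossing inside the cross-connected component of `Ū`. Indeed,
let `a` cross `b` there, with `a < v`. As `b` does not cross `v`, some corner of `b` and `v` is
small. It is not a corner `b⁽*⁾ ∩ v`, for then `a ∩ b⁽*⁾ ⊆ (a ∩ v*) ∪ (b⁽*⁾ ∩ v)` would be
small although `a` crosses `b`. So it is a corner `b⁽*⁾ ∩ v*`, which by good position is the only
small corner: `b⁽*⁾ < v`. The same holds on the side of `W̄` by the symmetry `x < y ↔ y* < x*`.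

Smallness of a corner `x ∩ y` may be measured over the group of `x` or of `y`: if `A ∩ B` is
`K`-finite, where `B` is `K`-invariant and not `K`-finite, then some coset `Kc` misses `A`, which
forces `A ∩ B` to be finite over any group over which `A` is almost invariant. -/

open Set

section HFinite

variable {G : Type*} [Group G]

theorem mem_iUnion_image_mul_right {H : Subgroup G} {F : Finset G} {z : G} :
    z ∈ ⋃ g ∈ F, (· * g) '' (H : Set G) ↔ ∃ f ∈ F, z * f⁻¹ ∈ H := by
  simp [Set.image_mul_right]

theorem HFinite.mono {H : Subgroup G} {W W' : Set G} (h : HFinite H W) (hsub : W' ⊆ W) :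
    HFinite H W' :=
  let ⟨F, hF⟩ := h
  ⟨F, hsub.trans hF⟩

theorem hfinite_empty (H : Subgroup G) : HFinite H (∅ : Set G) :=
  ⟨∅, empty_subset _⟩

theorem HFinite.union {H : Subgroup G} {W W' : Set G} (h : HFinite H W) (h' : HFinite H W') :
    HFinite H (W ∪ W') := by
  classical
  obtain ⟨F, hF⟩ := h
  obtain ⟨F', hF'⟩ := h'
  exact ⟨F ∪ F', by rw [Finset.set_biUnion_union]; exact union_subset_union hF hF'⟩

theorem hfinite_biUnion {H : Subgroup G} (E : Finset G) {S : G → Set G}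
    (h : ∀ e ∈ E, HFinite H (S e)) : HFinite H (⋃ e ∈ E, S e) := by
  classical
  induction E using Finset.induction_on with
  | empty => simpa using hfinite_empty H
  | insert a E _ ih =>
    rw [Finset.set_biUnion_insert]
    exact (h a (E.mem_insert_self a)).union (ih fun e he => h e (Finset.mem_insert_of_mem he))

theorem exists_coset_disjoint_of_hfinite_inter {K : Subgroup G} {A B : Set G}
    (hBinv : ∀ k ∈ K, leftTr k B = B) (hB : ¬ HFinite K B) (hAB : HFinite K (A ∩ B)) :
    ∃ c : G, ∀ k ∈ K, k * c ∉ A := by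
  obtain ⟨F, hF⟩ := hAB
  obtain ⟨c, hcB, hcF⟩ := not_subset.1 fun hsub => hB ⟨F, hsub⟩
  refine ⟨c, fun k hk hkA => hcF ?_⟩
  have hkB : k * c ∈ B := hBinv k hk ▸ ⟨c, hcB, rfl⟩
  obtain ⟨f, hf, hkcf⟩ := mem_iUnion_image_mul_right.1 (hF ⟨hkA, hkB⟩)
  refine mem_iUnion_image_mul_right.2 ⟨f, hf, ?_⟩
  simpa [mul_assoc] using K.mul_mem (K.inv_mem hk) hkcf

theorem hfinite_of_coset_disjoint {Ha K : Subgroup G} {A W : Set G}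
    (hA : ∀ g : G, HFinite Ha (symmDiff A ((· * g) '' A)))
    (hWA : W ⊆ A) (hW : HFinite K W) {c : G} (hc : ∀ k ∈ K, k * c ∉ A) : HFinite Ha W := by
  obtain ⟨F, hF⟩ := hW
  -- `z ∈ W ∩ Kf` lies in `A` but not in `A c⁻¹ f`, as `z f⁻¹ c ∈ Kc` misses `A`.
  refine (hfinite_biUnion F fun f _ => hA (c⁻¹ * f)).mono fun z hz => ?_
  obtain ⟨f, hf, hzf⟩ := mem_iUnion_image_mul_right.1 (hF hz)
  refine mem_biUnion hf (mem_symmDiff.2 (Or.inl ⟨hWA hz, ?_⟩))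
  rintro ⟨x, hxA, rfl⟩
  exact hc _ hzf (by simpa [mul_assoc] using hxA)

theorem hfinite_of_subset_of_hfinite_inter {Ha K : Subgroup G} {A B W : Set G}
    (hA : ∀ g : G, HFinite Ha (symmDiff A ((· * g) '' A)))
    (hBinv : ∀ k ∈ K, leftTr k B = B) (hB : ¬ HFinite K B) (hAB : HFinite K (A ∩ B))
    (hWA : W ⊆ A) (hW : HFinite K W) : HFinite Ha W :=
  let ⟨_, hc⟩ := exists_coset_disjoint_of_hfinite_inter hBinv hB hAB
  hfinite_of_coset_disjoint hA hWA hW hc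

end HFinite

section Translate

variable {G : Type*} [Group G]

theorem leftTr_one (A : Set G) : leftTr 1 A = A := by
  simp [leftTr]

theorem leftTr_symmDiff (g : G) (A B : Set G) :
    leftTr g (symmDiff A B) = symmDiff (leftTr g A) (leftTr g B) :=
  image_symmDiff (mul_right_injective g) A B

theorem image_mul_right_leftTr (g g' : G) (A : Set G) :
    (· * g') '' leftTr g A = leftTr g ((· * g') '' A) := by
  simp only [leftTr, image_image, mul_assoc]

theorem mem_conjSub {g x : G} {H : Subgroup G} : x ∈ conjSub g H ↔ g⁻¹ * x * g ∈ H := by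
  simp only [conjSub, Subgroup.mem_map, MulEquiv.coe_toMonoidHom, MulAut.conj_apply]
  constructor
  · rintro ⟨h, hh, rfl⟩
    simpa [mul_assoc] using hh
  · exact fun hx => ⟨_, hx, by group⟩

theorem conjSub_inv_conjSub (g : G) (H : Subgroup G) : conjSub g⁻¹ (conjSub g H) = H := by
  ext x
  simp [mem_conjSub, mul_assoc]

theorem hfinite_leftTr {H : Subgroup G} {W : Set G} (g : G) (h : HFinite H W) :
    HFinite (conjSub g H) (leftTr g W) := by
  classical
  obtain ⟨F, hF⟩ := h
  refine ⟨F.image (g * ·), ?_⟩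
  rintro _ ⟨x, hx, rfl⟩
  obtain ⟨f, hf, hxf⟩ := mem_iUnion_image_mul_right.1 (hF hx)
  refine mem_iUnion_image_mul_right.2 ⟨g * f, Finset.mem_image_of_mem _ hf, ?_⟩
  simpa [mem_conjSub, mul_assoc] using hxf

theorem hfinite_of_hfinite_leftTr {H : Subgroup G} {W : Set G} (g : G)
    (h : HFinite (conjSub g H) (leftTr g W)) : HFinite H W := by
  simpa [leftTr_leftTr, leftTr_one, conjSub_inv_conjSub] using hfinite_leftTr g⁻¹ h

theorem AlmostInv.compl {H : Subgroup G} {A : Set G} (h : AlmostInv H A) : AlmostInv H Aᶜ := by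
  refine ⟨fun k hk => by rw [leftTr_compl, h.1 k hk], fun g => ?_⟩
  rw [image_compl_eq (Group.mulRight_bijective g), compl_symmDiff_compl]
  exact h.2 g

theorem AlmostInv.leftTr {H : Subgroup G} {A : Set G} (g : G) (h : AlmostInv H A) :
    AlmostInv (conjSub g H) (leftTr g A) := by
  refine ⟨fun k hk => ?_, fun g' => ?_⟩
  · rw [mem_conjSub] at hk
    rw [leftTr_leftTr, show k * g = g * (g⁻¹ * k * g) by group, ← leftTr_leftTr, h.1 _ hk]
  · rw [image_mul_right_leftTr, ← leftTr_symmDiff]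
    exact hfinite_leftTr g (h.2 g')

theorem NontrivialAI.compl {H : Subgroup G} {A : Set G} (h : NontrivialAI H A) :
    NontrivialAI H Aᶜ :=
  ⟨h.1.compl, h.2.2, by rw [compl_compl]; exact h.2.1⟩

theorem NontrivialAI.leftTr {H : Subgroup G} {A : Set G} (g : G) (h : NontrivialAI H A) :
    NontrivialAI (conjSub g H) (leftTr g A) :=
  ⟨h.1.leftTr g, fun hf => h.2.1 (hfinite_of_hfinite_leftTr g hf),
    fun hf => h.2.2 (hfinite_of_hfinite_leftTr g (by rwa [leftTr_compl]))⟩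

end Translate

section Orient

variable {α : Type*} {U V : Set α}

def orient (s : Bool) (U : Set α) : Set α := cond s U Uᶜ

theorem corner_eq_inter (U V : Set α) (p : Bool × Bool) :
    corner U V p = orient p.1 U ∩ orient p.2 V :=
  rfl

theorem corner_swap (U V : Set α) (p : Bool × Bool) : corner V U p.swap = corner U V p :=
  inter_comm _ _

theorem corner_orient_left (s : Bool) (U V : Set α) (p : Bool × Bool) :
    corner (orient s U) V p = corner U V (s == p.1, p.2) := by
  rcases p with ⟨_ | _, _⟩ <;> cases s <;> simp [corner, orient]

theorem corner_compl_compl (U V : Set α) (p : Bool × Bool) :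
    corner Vᶜ Uᶜ p = corner U V (!p.2, !p.1) := by
  rcases p with ⟨_ | _, _ | _⟩ <;> simp [corner, inter_comm]

theorem orient_compl (s : Bool) (U : Set α) : orient s Uᶜ = orient (!s) U := by
  cases s <;> simp [orient]

theorem compl_orient (s : Bool) (U : Set α) : (orient s U)ᶜ = orient (!s) U := by
  cases s <;> simp [orient]

theorem orient_eq_or (s : Bool) (U : Set α) : orient s U = U ∨ orient s U = Uᶜ := by
  cases s <;> simp [orient]

theorem exists_eq_orient_of_eq_or (h : V = U ∨ V = Uᶜ) : ∃ s, V = orient s U := by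
  rcases h with rfl | rfl
  exacts [⟨true, rfl⟩, ⟨false, rfl⟩]

theorem orient_ne_of_ne (s : Bool) (h : U ≠ V) (h' : U ≠ Vᶜ) : orient s U ≠ V := by
  cases s
  · exact fun e => h' (by rw [← e, orient, cond_false, compl_compl])
  · exact h

end Orient

section Translates

variable {G : Type*} [Group G] {ι : Type*} {H : ι → Subgroup G} {X : ι → Set G}
  {U V : Set G} {K : Subgroup G}

theorem NontrivialAI.orient (s : Bool) (h : NontrivialAI K U) : NontrivialAI K (orient s U) := by
  cases s
  exacts [h.compl, h]

theorem compl_mem_translates (hU : U ∈ Translates X) : Uᶜ ∈ Translates X := by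
  obtain ⟨g, i, rfl | rfl⟩ := hU
  exacts [⟨g, i, Or.inr rfl⟩, ⟨g, i, Or.inl (compl_compl _)⟩]

theorem orient_mem_translates (s : Bool) (hU : U ∈ Translates X) : orient s U ∈ Translates X := by
  cases s
  exacts [compl_mem_translates hU, hU]

/-- `U` may have several presentations `gXᵢ⁽*⁾`, hence several associated groups `gHᵢg⁻¹`. -/
def IsAssocGroup (H : ι → Subgroup G) (X : ι → Set G) (U : Set G) (K : Subgroup G) : Prop :=
  ∃ (g : G) (i : ι), (U = leftTr g (X i) ∨ U = (leftTr g (X i))ᶜ) ∧ K = conjSub g (H i)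

theorem exists_isAssocGroup (hU : U ∈ Translates X) : ∃ K, IsAssocGroup H X U K :=
  let ⟨g, i, hU⟩ := hU
  ⟨_, g, i, hU, rfl⟩

theorem IsAssocGroup.nontrivialAI (hnt : ∀ i, NontrivialAI (H i) (X i))
    (h : IsAssocGroup H X U K) : NontrivialAI K U := by
  obtain ⟨g, i, rfl | rfl, rfl⟩ := h
  exacts [(hnt i).leftTr g, ((hnt i).leftTr g).compl]

theorem isAssocGroup_compl_iff : IsAssocGroup H X Uᶜ K ↔ IsAssocGroup H X U K := by
  simp only [IsAssocGroup, ← compl_inj_iff (x := U), compl_compl, or_comm]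

theorem smallOver_iff {W : Set G} :
    SmallOver H X U W ↔ ∃ K, IsAssocGroup H X U K ∧ HFinite K W := by
  constructor
  · rintro ⟨g, i, hU, hW⟩
    exact ⟨_, ⟨g, i, hU, rfl⟩, hW⟩
  · rintro ⟨_, ⟨g, i, hU, rfl⟩, hW⟩
    exact ⟨g, i, hU, hW⟩

theorem smallOver_compl_iff {W : Set G} : SmallOver H X Uᶜ W ↔ SmallOver H X U W := by
  simp only [smallOver_iff, isAssocGroup_compl_iff]

theorem smallOver_orient_iff (s : Bool) {W : Set G} :
    SmallOver H X (orient s U) W ↔ SmallOver H X U W := by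
  cases s
  exacts [smallOver_compl_iff, Iff.rfl]

theorem smallOver_empty (hU : U ∈ Translates X) : SmallOver H X U ∅ :=
  let ⟨g, i, hU⟩ := hU
  ⟨g, i, hU, hfinite_empty _⟩

theorem hfinite_corner_of_isAssocGroup (hnt : ∀ i, NontrivialAI (H i) (X i))
    {KU KV : Subgroup G} (hKU : IsAssocGroup H X U KU) (hKV : IsAssocGroup H X V KV)
    (p : Bool × Bool) (h : HFinite KU (corner U V p)) : HFinite KV (corner U V p) := by
  have hA := ((hKV.nontrivialAI hnt).orient p.2).1.2
  have hB := (hKU.nontrivialAI hnt).orient p.1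
  rw [corner_eq_inter, inter_comm] at h ⊢
  exact hfinite_of_subset_of_hfinite_inter hA hB.1.1 hB.2.1 h inter_subset_left h

theorem SmallOver.hfinite_corner (hnt : ∀ i, NontrivialAI (H i) (X i))
    (hK : IsAssocGroup H X V K) {p : Bool × Bool} (h : SmallOver H X U (corner U V p)) :
    HFinite K (corner U V p) :=
  let ⟨_, hKU, hfin⟩ := smallOver_iff.1 h
  hfinite_corner_of_isAssocGroup hnt hKU hK p hfin

theorem smallOver_corner_comm (hnt : ∀ i, NontrivialAI (H i) (X i))
    (hU : U ∈ Translates X) (hV : V ∈ Translates X) (p : Bool × Bool) :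
    SmallOver H X U (corner U V p) ↔ SmallOver H X V (corner U V p) := by
  obtain ⟨KU, hKU⟩ := exists_isAssocGroup (H := H) hU
  obtain ⟨KV, hKV⟩ := exists_isAssocGroup (H := H) hV
  refine ⟨fun h => smallOver_iff.2 ⟨KV, hKV, h.hfinite_corner hnt hKV⟩, fun h => ?_⟩
  rw [← corner_swap] at h ⊢
  exact smallOver_iff.2 ⟨KU, hKU, h.hfinite_corner hnt hKU⟩

theorem CrossesE.symm (hnt : ∀ i, NontrivialAI (H i) (X i))
    (hU : U ∈ Translates X) (hV : V ∈ Translates X) (h : CrossesE H X U V) :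
    CrossesE H X V U :=
  fun p hp => h p.swap ((smallOver_corner_comm hnt hU hV p.swap).2 (by rwa [corner_swap]))

theorem ccRelSet_symm (hnt : ∀ i, NontrivialAI (H i) (X i)) (h : ccRelSet H X U V) :
    ccRelSet H X V U := by
  obtain ⟨hU, hV, rfl | rfl | hUV⟩ := h
  · exact ⟨hU, hU, Or.inl rfl⟩
  · exact ⟨hV, hU, Or.inr (Or.inl (compl_compl V).symm)⟩
  · exact ⟨hV, hU, Or.inr (Or.inr (hUV.symm hnt hU hV))⟩

theorem SameCCC.symm (h : SameCCC H X U V) : SameCCC H X V U :=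
  Relation.EqvGen.symm _ _ h

theorem SameCCC.trans {W : Set G} (h : SameCCC H X U V) (h' : SameCCC H X V W) :
    SameCCC H X U W :=
  Relation.EqvGen.trans _ _ _ h h'

theorem sameCCC_compl (hU : U ∈ Translates X) : SameCCC H X U Uᶜ :=
  Relation.EqvGen.rel _ _ ⟨hU, compl_mem_translates hU, Or.inr (Or.inl (compl_compl U).symm)⟩

end Translates

section Order

variable {G : Type*} [Group G] {ι : Type*} {H : ι → Subgroup G} {X : ι → Set G}
  {U V a b v x y : Set G}

theorem eLE_compl_compl (hnt : ∀ i, NontrivialAI (H i) (X i))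
    (hU : U ∈ Translates X) (hV : V ∈ Translates X) (h : eLE H X U V) : eLE H X Vᶜ Uᶜ := by
  rcases h with hUV | ⟨hsmall, honly⟩
  · left
    rwa [compl_compl, inter_comm]
  · refine Or.inr ⟨?_, fun p hp hsp => ?_⟩
    · rw [smallOver_compl_iff, compl_compl, inter_comm]
      exact (smallOver_corner_comm hnt hU hV (true, false)).1 hsmall
    · rw [corner_compl_compl, smallOver_compl_iff, ← smallOver_corner_comm hnt hU hV] at hsp
      exact honly _ (by rcases p with ⟨_ | _, _ | _⟩ <;> simp_all) hsp

theorem eLT_iff_eLT_compl_compl (hnt : ∀ i, NontrivialAI (H i) (X i))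
    (hU : U ∈ Translates X) (hV : V ∈ Translates X) : eLT H X U V ↔ eLT H X Vᶜ Uᶜ := by
  refine ⟨fun h => ⟨eLE_compl_compl hnt hU hV h.1, fun e => h.2 (compl_inj_iff.1 e).symm⟩,
    fun h => ⟨?_, fun e => h.2 (by rw [e])⟩⟩
  simpa using eLE_compl_compl hnt (compl_mem_translates hV) (compl_mem_translates hU) h.1

theorem eLE_orient_of_smallOver_corner (s : Bool)
    (hsmall : SmallOver H X U (corner U V (s, false)))
    (honly : ∀ p, p ≠ (s, false) → ¬ SmallOver H X U (corner U V p)) :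
    eLE H X (orient s U) V := by
  refine Or.inr ⟨(smallOver_orient_iff s).2 hsmall, fun p hp hsp => ?_⟩
  rw [corner_orient_left, smallOver_orient_iff] at hsp
  exact honly _ (by rcases p with ⟨_ | _, _ | _⟩ <;> cases s <;> simp_all) hsp

theorem not_smallOver_corner_of_crossesE_of_eLE (hnt : ∀ i, NontrivialAI (H i) (X i))
    (ha : a ∈ Translates X) (hv : v ∈ Translates X) (hab : CrossesE H X a b) {r : Bool}
    (hle : eLE H X (orient r a) v) (s : Bool) : ¬ SmallOver H X b (corner b v (s, true)) := by
  intro hbv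
  obtain ⟨Ka, hKa⟩ := exists_isAssocGroup (H := H) ha
  obtain ⟨Kv, hKv⟩ := exists_isAssocGroup (H := H) hv
  have hav : HFinite Kv (orient r a ∩ vᶜ) := by
    rcases hle with hemp | ⟨hsmall, -⟩
    · rw [hemp]
      exact hfinite_empty Kv
    · exact SmallOver.hfinite_corner (p := (r, false)) hnt hKv ((smallOver_orient_iff r).1 hsmall)
  have hab' : HFinite Kv (orient r a ∩ orient s b) :=
    ((hbv.hfinite_corner hnt hKv).union hav).mono fun z hz => by
      by_cases hzv : z ∈ v
      exacts [Or.inl ⟨hz.2, hzv⟩, Or.inr ⟨hz.1, hzv⟩]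
  have hvc := (hKv.nontrivialAI hnt).compl
  exact hab (r, s) <| smallOver_iff.2 ⟨Ka, hKa, hfinite_of_subset_of_hfinite_inter
    ((hKa.nontrivialAI hnt).orient r).1.2 hvc.1.1 hvc.2.1 hav inter_subset_left hab'⟩

theorem exists_orient_lt_of_crossesE (hnt : ∀ i, NontrivialAI (H i) (X i))
    (hgood : GoodPosition H X) (ha : a ∈ Translates X) (hb : b ∈ Translates X)
    (hv : v ∈ Translates X) (hab : CrossesE H X a b) (hbv : ¬ CrossesE H X b v)
    (hne : b ≠ v) (hne' : b ≠ vᶜ) {r : Bool} (h : eLT H X (orient r a) v) :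
    ∃ s, eLT H X (orient s b) v := by
  have hlow := not_smallOver_corner_of_crossesE_of_eLE hnt ha hv hab h.1
  by_cases hemp : ∃ s, corner b v (s, false) = ∅
  · obtain ⟨s, hs⟩ := hemp
    exact ⟨s, Or.inl hs, orient_ne_of_ne s hne hne'⟩
  simp only [not_exists] at hemp
  obtain ⟨⟨s, _ | _⟩, hsmall⟩ : ∃ p, SmallOver H X b (corner b v p) := by
    by_contra! hno
    exact hbv hno
  · refine ⟨s, eLE_orient_of_smallOver_corner s hsmall fun q hq hsmall' => ?_,
      orient_ne_of_ne s hne hne'⟩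
    -- A second small corner would force an empty one, but the corners `b⁽*⁾ ∩ v*` are
    -- nonempty and the corners `b⁽*⁾ ∩ v` are not small.
    obtain ⟨⟨s', _ | _⟩, hr⟩ := hgood b hb v hv (s, false) q hq.symm hsmall hsmall'
    · exact hemp s' hr
    · exact hlow s' (hr ▸ smallOver_empty hb)
  · exact absurd hsmall (hlow s)

theorem exists_orient_lt_of_ccRelSet (hnt : ∀ i, NontrivialAI (H i) (X i))
    (hgood : GoodPosition H X) (hv : v ∈ Translates X) (hab : ccRelSet H X a b)
    (hbv : ¬ SameCCC H X b v) (h : ∃ r, eLT H X (orient r a) v) :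
    ∃ s, eLT H X (orient s b) v := by
  obtain ⟨r, hr⟩ := h
  have hrel (h : b = v ∨ b = vᶜ ∨ CrossesE H X b v) : SameCCC H X b v :=
    Relation.EqvGen.rel _ _ ⟨hab.2.1, hv, h⟩
  obtain ⟨ha, hb, rfl | rfl | hcross⟩ := hab
  · exact ⟨r, hr⟩
  · exact ⟨!r, by rwa [← orient_compl]⟩
  · exact exists_orient_lt_of_crossesE hnt hgood ha hb hv hcross
      (fun h => hbv (hrel (.inr (.inr h)))) (fun h => hbv (hrel (.inl h)))
      (fun h => hbv (hrel (.inr (.inl h)))) hr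

theorem exists_orient_lt_of_sameCCC (hnt : ∀ i, NontrivialAI (H i) (X i))
    (hgood : GoodPosition H X) (hv : v ∈ Translates X) (hxy : SameCCC H X x y)
    (hxv : ¬ SameCCC H X x v) (h : ∃ r, eLT H X (orient r x) v) :
    ∃ s, eLT H X (orient s y) v := by
  let P (z : Set G) : Prop := ¬ SameCCC H X z v ∧ ∃ s, eLT H X (orient s z) v
  have hstep {a b : Set G} (hab : ccRelSet H X a b) (ha : P a) : P b :=
    have hbv : ¬ SameCCC H X b v := fun hbv => ha.1 (SameCCC.trans (.rel _ _ hab) hbv)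
    ⟨hbv, exists_orient_lt_of_ccRelSet hnt hgood hv hab hbv ha.2⟩
  have hP : P x ↔ P y :=
    (Equivalence.eqvGen_iff (r := fun a b => P a ↔ P b) ⟨fun _ => .rfl, .symm, .trans⟩).1 <|
      Relation.EqvGen.mono (fun a b hab => ⟨hstep hab, hstep (ccRelSet_symm hnt hab)⟩) x y hxy
  exact (hP.1 ⟨hxv, h⟩).2

theorem exists_lt_orient_of_sameCCC (hnt : ∀ i, NontrivialAI (H i) (X i))
    (hgood : GoodPosition H X) (hv : v ∈ Translates X) (hx : x ∈ Translates X)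
    (hy : y ∈ Translates X) (hxy : SameCCC H X x y) (hxv : ¬ SameCCC H X x v)
    (h : ∃ r, eLT H X v (orient r x)) : ∃ s, eLT H X v (orient s y) := by
  obtain ⟨r, hr⟩ := h
  rw [eLT_iff_eLT_compl_compl hnt hv (orient_mem_translates r hx), compl_orient] at hr
  obtain ⟨s, hs⟩ := exists_orient_lt_of_sameCCC hnt hgood (compl_mem_translates hv) hxy
    (fun h => hxv (h.trans (sameCCC_compl hv).symm)) ⟨_, hr⟩
  refine ⟨!s, ?_⟩
  rwa [eLT_iff_eLT_compl_compl hnt hv (orient_mem_translates _ hy), compl_orient, Bool.not_not]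

end Order

theorem stmt7_general {G : Type*} [Group G] {n : ℕ}
    (H : Fin n → Subgroup G) (X : Fin n → Set G)
    (hnt : ∀ i, NontrivialAI (H i) (X i))
    (hgood : GoodPosition H X)
    (U U' V W W' : Set G)
    (hV : V ∈ Translates X)
    (hW : W ∈ Translates X) (hW' : W' ∈ Translates X)
    (hUU' : SameCCC H X U U') (hWW' : SameCCC H X W W')
    (hAB : ¬ SameCCC H X U V) (hBC : ¬ SameCCC H X V W)
    (hbetween : BetweenBar H X U V W) :
    BetweenBar H X U' V W' := by
  obtain ⟨u, v, w, hu, hv, hw, huv, hvw⟩ := hbetween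
  obtain ⟨r, rfl⟩ := exists_eq_orient_of_eq_or hu
  obtain ⟨t, rfl⟩ := exists_eq_orient_of_eq_or hw
  have hvE : v ∈ Translates X := by
    rcases hv with rfl | rfl
    exacts [hV, compl_mem_translates hV]
  have hvV : SameCCC H X v V := by
    rcases hv with rfl | rfl
    exacts [Relation.EqvGen.refl _, (sameCCC_compl hV).symm]
  obtain ⟨r', hr'⟩ := exists_orient_lt_of_sameCCC hnt hgood hvE hUU'
    (fun h => hAB (h.trans hvV)) ⟨r, huv⟩
  obtain ⟨t', ht'⟩ := exists_lt_orient_of_sameCCC hnt hgood hvE hW hW' hWW'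
    (fun h => hBC (hvV.symm.trans h.symm)) ⟨t, hvw⟩
  exact ⟨_, v, _, orient_eq_or r' U', hv, orient_eq_or t' W', hr', ht'⟩

/-- Betweenness of cross-connected components is independent of the chosen
representatives: if `A`, `B`, `C` are distinct cross-connected components of `Ē`, with
`Ū, Ū' ∈ A`, `V̄ ∈ B`, `W̄, W̄' ∈ C`, and `Ū V̄ W̄` holds, then `Ū' V̄ W̄'` holds. -/
theorem stmt7 {G : Type*} [Group G] (hGfg : Group.FG G) {n : ℕ}
    (H : Fin n → Subgroup G) (X : Fin n → Set G)
    (hHfg : ∀ i, (H i).FG) (hnt : ∀ i, NontrivialAI (H i) (X i))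
    (hgood : GoodPosition H X)
    (U U' V W W' : Set G)
    (hU : U ∈ Translates X) (hU' : U' ∈ Translates X) (hV : V ∈ Translates X)
    (hW : W ∈ Translates X) (hW' : W' ∈ Translates X)
    (hUU' : SameCCC H X U U') (hWW' : SameCCC H X W W')
    (hAB : ¬ SameCCC H X U V) (hBC : ¬ SameCCC H X V W) (hAC : ¬ SameCCC H X U W)
    (hbetween : BetweenBar H X U V W) :
    BetweenBar H X U' V W' :=
  stmt7_general H X hnt hgood U U' V W W' hV hW hW' hUU' hWW' hAB hBC hbetween
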